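/- Let G1 and G2 be connected graphs with V(G1) ∩ V(G2) = {v}, and let G be their union. Then the minimum number of edges of a 2-edge-connected spanning multi-subgraph of G equals the sum of the corresponding minima for G1 and G2. -/

import Mathlib

/-!
A vertex `v` shared by `G₁` and `G₂` is a cut vertex of `G = G₁ ∪ G₂`. Sending every vertex of
`G₂ - v` to `v` maps each walk of a multi-subgraph of `2G` to a walk using only its `G₁`-edges, so
the `G₁`-part of a 2-edge-connected spanning multi-subgraph of `2G` is one of `2G₁`, and likewise
for `G₂`. Conversely, gluing such subgraphs of `2G₁` and `2G₂` at `v` gives one of `2G`: deleting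
a single edge copy affects only one side, and every vertex still reaches `v`. The edge sets being
disjoint, sizes add, so the minima add.
-/

open Finset
open scoped Classical

/-- A multigraph on vertex type `V` with edge index type `E`, no loops. -/
structure MGraph (V E : Type) where
  ends : E → Sym2 V
  not_loop : ∀ e, ¬ (ends e).IsDiag

namespace MGraph

variable {V E : Type} [Fintype V] [Fintype E] [DecidableEq V] [DecidableEq E]

/-- Reachability in the multi-subgraph of `2G` given by multiplicities `m`. -/
def Reach (G : MGraph V E) (m : E → ℕ) : V → V → Prop :=
  Relation.ReflTransGen (fun a b => ∃ e, 1 ≤ m e ∧ G.ends e = s(a, b))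

/-- The multi-subgraph given by multiplicities `m` is spanning and connected. -/
def Conn (G : MGraph V E) (m : E → ℕ) : Prop := ∀ u v : V, G.Reach m u v

/-- Degree of `v` in the multi-subgraph with multiplicities `m`. -/
noncomputable def deg (G : MGraph V E) (m : E → ℕ) (v : V) : ℕ :=
  ∑ e, if v ∈ G.ends e then m e else 0

/-- Number of edges (with multiplicity). -/
def size (m : E → ℕ) : ℕ := ∑ e, m e

/-- `m` is a multi-subgraph of `2G`. -/
def Sub2 (m : E → ℕ) : Prop := ∀ e, m e ≤ 2

/-- The multi-subgraph `m` is 2-edge-connected: at least two vertices, connected,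
and still connected after removing any one edge copy. -/
def TwoEC (G : MGraph V E) (m : E → ℕ) : Prop :=
  2 ≤ Fintype.card V ∧ G.Conn m ∧
    ∀ e, 1 ≤ m e → G.Conn (Function.update m e (m e - 1))

/-- A tour of `G`: a spanning connected multi-subgraph of `2G` with all degrees even. -/
def IsTour (G : MGraph V E) (m : E → ℕ) : Prop :=
  Sub2 m ∧ G.Conn m ∧ ∀ v, Even (G.deg m v)

/-- A connected-`T`-join of `G`: a `T`-join in `2G` that is spanning and connected. -/
def IsConnTJoin (G : MGraph V E) (T : Finset V) (m : E → ℕ) : Prop :=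
  Sub2 m ∧ G.Conn m ∧ ∀ v, (v ∈ T ↔ Odd (G.deg m v))

/-- `G` itself is connected. -/
def Connected (G : MGraph V E) : Prop := G.Conn (fun _ => 1)

/-- `G` itself is 2-edge-connected. -/
def TwoEdgeConnected (G : MGraph V E) : Prop := G.TwoEC (fun _ => 1)

/-- The minimum size of a 2-edge-connected spanning multi-subgraph of the subgraph
of `G` with vertex set `A` and edge set `Es`. -/
noncomputable def opt2ECrel (G : MGraph V E) (A : Finset V) (Es : Finset E) : ℕ :=
  sInf {n | ∃ m : E → ℕ, Sub2 m ∧ (∀ e ∉ Es, m e = 0) ∧ 2 ≤ A.card ∧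
    (∀ u ∈ A, ∀ v ∈ A, G.Reach m u v) ∧
    (∀ e, 1 ≤ m e → ∀ u ∈ A, ∀ v ∈ A, G.Reach (Function.update m e (m e - 1)) u v) ∧
    size m = n}

end MGraph

open scoped Pointwise

theorem Nat.sInf_add_of_nonempty {s t : Set ℕ} (hs : s.Nonempty) (ht : t.Nonempty) :
    sInf (s + t) = sInf s + sInf t := by
  refine le_antisymm (Nat.sInf_le (Set.add_mem_add (Nat.sInf_mem hs) (Nat.sInf_mem ht))) ?_
  obtain ⟨a, ha, b, hb, hab⟩ := Nat.sInf_mem (hs.add ht)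
  rw [← hab]
  exact add_le_add (Nat.sInf_le ha) (Nat.sInf_le hb)

namespace MGraph

section Reach

variable {V E : Type} {G : MGraph V E}

theorem Reach.mono {m m' : E → ℕ} (h : m ≤ m') {u w : V} (hr : G.Reach m u w) :
    G.Reach m' u w :=
  Relation.ReflTransGen.mono (fun _ _ ⟨e, he, hend⟩ => ⟨e, he.trans (h e), hend⟩) _ _ hr

theorem reach_add_of_union_eq_univ [Fintype V] [DecidableEq V] {A B : Finset V} {v : V}
    (hAB : A ∪ B = univ) (hvA : v ∈ A) (hvB : v ∈ B) {m₁ m₂ : E → ℕ}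
    (h₁ : ∀ u ∈ A, ∀ w ∈ A, G.Reach m₁ u w) (h₂ : ∀ u ∈ B, ∀ w ∈ B, G.Reach m₂ u w)
    (u w : V) : G.Reach (m₁ + m₂) u w := by
  have hmem (x : V) : x ∈ A ∨ x ∈ B := mem_union.mp (hAB ▸ mem_univ x)
  have h₁' {x y} (hx : x ∈ A) (hy : y ∈ A) : G.Reach (m₁ + m₂) x y :=
    Reach.mono (fun _ => Nat.le_add_right _ _) (h₁ x hx y hy)
  have h₂' {x y} (hx : x ∈ B) (hy : y ∈ B) : G.Reach (m₁ + m₂) x y :=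
    Reach.mono (fun _ => Nat.le_add_left _ _) (h₂ x hx y hy)
  have hu : G.Reach (m₁ + m₂) u v := (hmem u).elim (h₁' · hvA) (h₂' · hvB)
  have hw : G.Reach (m₁ + m₂) v w := (hmem w).elim (h₁' hvA ·) (h₂' hvB ·)
  exact hu.trans hw

end Reach

section Restrict

variable {V E : Type} [DecidableEq E] {G : MGraph V E}

def restrict (m : E → ℕ) (Es : Finset E) : E → ℕ := fun e => if e ∈ Es then m e else 0

theorem restrict_le (m : E → ℕ) (Es : Finset E) : restrict m Es ≤ m := fun e => by
  unfold restrict; split_ifs <;> simp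

theorem restrict_update_of_mem {m : E → ℕ} {Es : Finset E} {e : E} (he : e ∈ Es) (k : ℕ) :
    restrict (Function.update m e k) Es = Function.update (restrict m Es) e k := by
  ext e'
  rcases eq_or_ne e' e with rfl | hne
  · simp [restrict, he]
  · simp [restrict, hne]

theorem size_eq_restrict_add [Fintype E] {E₁ E₂ : Finset E} (hEu : E₁ ∪ E₂ = univ)
    (hEd : Disjoint E₁ E₂) (m : E → ℕ) : size m = size (restrict m E₁) + size (restrict m E₂) := by
  simp only [size, restrict, sum_ite_mem, univ_inter, ← sum_union hEd, hEu]

/-- Collapsing the side `B` of a cut vertex `v` onto `v` turns walks into walks on the side `A`. -/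
theorem Reach.restrict_of_inter_eq [DecidableEq V] {A B : Finset V} {Es : Finset E} {v : V}
    (hAB : A ∩ B = {v}) (hin : ∀ e ∈ Es, ∀ x ∈ G.ends e, x ∈ A)
    (hout : ∀ e ∉ Es, ∀ x ∈ G.ends e, x ∈ B) {m : E → ℕ} {a b : V} (h : G.Reach m a b) :
    G.Reach (restrict m Es) (if a ∈ A then a else v) (if b ∈ A then b else v) := by
  have hB {x : V} (hx : x ∈ B) : (if x ∈ A then x else v) = v := by
    split_ifs with hxA
    · simpa [hAB] using mem_inter.mpr ⟨hxA, hx⟩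
    · rfl
  induction h with
  | refl => exact .refl
  | @tail c d _ hcd ih =>
    obtain ⟨e, he, hend⟩ := hcd
    have hc : c ∈ G.ends e := hend ▸ Sym2.mem_mk_left c d
    have hd : d ∈ G.ends e := hend ▸ Sym2.mem_mk_right c d
    by_cases heEs : e ∈ Es
    · rw [if_pos (hin e heEs c hc)] at ih
      rw [if_pos (hin e heEs d hd)]
      exact ih.tail ⟨e, by simpa [restrict, heEs] using he, hend⟩
    · rw [hB (hout e heEs c hc)] at ih
      rwa [hB (hout e heEs d hd)]

end Restrict

section TwoEC

variable {V E : Type} [DecidableEq E] (G : MGraph V E)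

/-- The multi-subgraphs over which `opt2ECrel G A Es` minimises. -/
structure IsTwoECOn (A : Finset V) (Es : Finset E) (m : E → ℕ) : Prop where
  sub2 : Sub2 m
  support : ∀ e ∉ Es, m e = 0
  two_le_card : 2 ≤ A.card
  reach : ∀ u ∈ A, ∀ w ∈ A, G.Reach m u w
  reach_update : ∀ e, 1 ≤ m e → ∀ u ∈ A, ∀ w ∈ A, G.Reach (Function.update m e (m e - 1)) u w

theorem opt2ECrel_eq [Fintype E] (A : Finset V) (Es : Finset E) :
    opt2ECrel G A Es = sInf (size '' {m | G.IsTwoECOn A Es m}) := by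
  unfold opt2ECrel
  congr 1
  ext n
  constructor
  · rintro ⟨m, h₁, h₂, h₃, h₄, h₅, rfl⟩
    exact ⟨m, ⟨h₁, h₂, h₃, h₄, h₅⟩, rfl⟩
  · rintro ⟨m, ⟨h₁, h₂, h₃, h₄, h₅⟩, rfl⟩
    exact ⟨m, h₁, h₂, h₃, h₄, h₅, rfl⟩

theorem opt2ECrel_of_card_lt_two [Fintype E] {A : Finset V} (Es : Finset E) (h : A.card < 2) :
    opt2ECrel G A Es = 0 := by
  have : {m | G.IsTwoECOn A Es m} = ∅ :=
    Set.eq_empty_of_forall_notMem fun _ hm => hm.two_le_card.not_gt h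
  rw [opt2ECrel_eq, this, Set.image_empty, Nat.sInf_empty]

theorem update_add_of_one_le {m₁ m₂ : E → ℕ} {e : E} (h : 1 ≤ m₁ e) :
    Function.update (m₁ + m₂) e ((m₁ + m₂) e - 1) = Function.update m₁ e (m₁ e - 1) + m₂ := by
  ext e'
  rcases eq_or_ne e' e with rfl | hne
  · simp only [Function.update_self, Pi.add_apply]; omega
  · simp [hne]

variable {G}

theorem IsTwoECOn.add [Fintype V] [Fintype E] [DecidableEq V]
    {V₁ V₂ : Finset V} {E₁ E₂ : Finset E} {v : V} {m₁ m₂ : E → ℕ}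
    (h₁ : G.IsTwoECOn V₁ E₁ m₁) (h₂ : G.IsTwoECOn V₂ E₂ m₂) (hVu : V₁ ∪ V₂ = univ)
    (hv₁ : v ∈ V₁) (hv₂ : v ∈ V₂) (hEd : Disjoint E₁ E₂) :
    G.IsTwoECOn univ univ (m₁ + m₂) where
  sub2 e := by
    by_cases he : e ∈ E₁
    · have := h₂.support e (disjoint_left.mp hEd he); have := h₁.sub2 e
      simp only [Pi.add_apply]; omega
    · have := h₁.support e he; have := h₂.sub2 e
      simp only [Pi.add_apply]; omega
  support e he := (he (mem_univ e)).elim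
  two_le_card := h₁.two_le_card.trans (card_le_univ V₁)
  reach u _ w _ := reach_add_of_union_eq_univ hVu hv₁ hv₂ h₁.reach h₂.reach u w
  reach_update e he u _ w _ := by
    have : 1 ≤ m₁ e ∨ 1 ≤ m₂ e := by simp only [Pi.add_apply] at he; omega
    rcases this with h | h
    · rw [update_add_of_one_le h]
      exact reach_add_of_union_eq_univ hVu hv₁ hv₂ (h₁.reach_update e h) h₂.reach u w
    · rw [add_comm m₁, update_add_of_one_le h, add_comm (Function.update m₂ e _)]
      exact reach_add_of_union_eq_univ hVu hv₁ hv₂ h₁.reach (h₂.reach_update e h) u w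

theorem IsTwoECOn.restrict_of_inter_eq [Fintype V] [Fintype E] [DecidableEq V]
    {A B : Finset V} {Es : Finset E} {v : V} {m : E → ℕ} (hm : G.IsTwoECOn univ univ m)
    (hAB : A ∩ B = {v}) (hin : ∀ e ∈ Es, ∀ x ∈ G.ends e, x ∈ A)
    (hout : ∀ e ∉ Es, ∀ x ∈ G.ends e, x ∈ B) (hA : 2 ≤ A.card) :
    G.IsTwoECOn A Es (restrict m Es) where
  sub2 e := (restrict_le m Es e).trans (hm.sub2 e)
  support _ he := if_neg he
  two_le_card := hA
  reach u hu w hw := by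
    have := (hm.reach u (mem_univ u) w (mem_univ w)).restrict_of_inter_eq hAB hin hout
    rwa [if_pos hu, if_pos hw] at this
  reach_update e he u hu w hw := by
    have heEs : e ∈ Es := by by_contra h; simp [restrict, h] at he
    have hme : m e = restrict m Es e := (if_pos heEs).symm
    have := (hm.reach_update e (hme ▸ he) u (mem_univ u) w (mem_univ w)).restrict_of_inter_eq
      hAB hin hout
    rwa [if_pos hu, if_pos hw, restrict_update_of_mem heEs, hme] at this

theorem isTwoECOn_restrict_two {A : Finset V} {Es : Finset E}
    (hc : ∀ u ∈ A, ∀ w ∈ A, G.Reach (restrict (fun _ => 1) Es) u w) (hA : 2 ≤ A.card) :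
    G.IsTwoECOn A Es (restrict (fun _ => 2) Es) where
  sub2 e := restrict_le _ Es e
  support _ he := if_neg he
  two_le_card := hA
  reach u hu w hw := (hc u hu w hw).mono fun e => by unfold restrict; split_ifs <;> simp
  reach_update e _ u hu w hw := (hc u hu w hw).mono fun e' => by
    rcases eq_or_ne e' e with rfl | hne
    · unfold restrict; split_ifs <;> simp
    · simp only [Function.update_of_ne hne]; unfold restrict; split_ifs <;> simp

theorem opt2ECrel_univ_eq_add [Fintype V] [Fintype E] [DecidableEq V]
    {V₁ V₂ : Finset V} {E₁ E₂ : Finset E} {v : V}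
    (hVu : V₁ ∪ V₂ = univ) (hVi : V₁ ∩ V₂ = {v}) (hEu : E₁ ∪ E₂ = univ) (hEd : Disjoint E₁ E₂)
    (hE₁ : ∀ e ∈ E₁, ∀ x ∈ G.ends e, x ∈ V₁) (hE₂ : ∀ e ∈ E₂, ∀ x ∈ G.ends e, x ∈ V₂)
    (hc₁ : ∀ u ∈ V₁, ∀ w ∈ V₁, G.Reach (restrict (fun _ => 1) E₁) u w)
    (hc₂ : ∀ u ∈ V₂, ∀ w ∈ V₂, G.Reach (restrict (fun _ => 1) E₂) u w)
    (h₁ : 2 ≤ V₁.card) (h₂ : 2 ≤ V₂.card) :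
    opt2ECrel G univ univ = opt2ECrel G V₁ E₁ + opt2ECrel G V₂ E₂ := by
  have hv : v ∈ V₁ ∩ V₂ := hVi ▸ mem_singleton_self v
  have hout₁ : ∀ e ∉ E₁, ∀ x ∈ G.ends e, x ∈ V₂ := fun e he =>
    hE₂ e ((mem_union.mp (hEu ▸ mem_univ e)).resolve_left he)
  have hout₂ : ∀ e ∉ E₂, ∀ x ∈ G.ends e, x ∈ V₁ := fun e he =>
    hE₁ e ((mem_union.mp (hEu ▸ mem_univ e)).resolve_right he)
  have hsplit : size '' {m | G.IsTwoECOn univ univ m} =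
      size '' {m | G.IsTwoECOn V₁ E₁ m} + size '' {m | G.IsTwoECOn V₂ E₂ m} := by
    ext n
    constructor
    · rintro ⟨m, hm, rfl⟩
      exact ⟨_, ⟨_, hm.restrict_of_inter_eq hVi hE₁ hout₁ h₁, rfl⟩,
        _, ⟨_, hm.restrict_of_inter_eq ((inter_comm V₂ V₁).trans hVi) hE₂ hout₂ h₂, rfl⟩,
        (size_eq_restrict_add hEu hEd m).symm⟩
    · rintro ⟨_, ⟨m₁, hm₁, rfl⟩, _, ⟨m₂, hm₂, rfl⟩, rfl⟩
      exact ⟨m₁ + m₂, hm₁.add hm₂ hVu (mem_inter.mp hv).1 (mem_inter.mp hv).2 hEd,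
        sum_add_distrib⟩
  rw [opt2ECrel_eq, opt2ECrel_eq, opt2ECrel_eq, hsplit]
  exact Nat.sInf_add_of_nonempty ⟨_, _, isTwoECOn_restrict_two hc₁ h₁, rfl⟩
    ⟨_, _, isTwoECOn_restrict_two hc₂ h₂, rfl⟩

end TwoEC

section Degenerate

variable {V E : Type}

theorem exists_mem_ends_ne (G : MGraph V E) (e : E) (v : V) : ∃ x ∈ G.ends e, x ≠ v := by
  obtain ⟨a, ha⟩ : ∃ a, a ∈ G.ends e := ⟨_, Sym2.out_fst_mem _⟩
  by_cases hav : a = v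
  · exact ⟨_, Sym2.other_mem ha, hav ▸ Sym2.other_ne (G.not_loop e) ha⟩
  · exact ⟨a, ha, hav⟩

theorem eq_univ_of_card_lt_two [Fintype V] [Fintype E] [DecidableEq V] [DecidableEq E]
    {G : MGraph V E} {V₁ V₂ : Finset V} {E₁ E₂ : Finset E} {v : V}
    (hVu : V₁ ∪ V₂ = univ) (hVi : V₁ ∩ V₂ = {v}) (hEu : E₁ ∪ E₂ = univ)
    (hE₁ : ∀ e ∈ E₁, ∀ x ∈ G.ends e, x ∈ V₁) (h : V₁.card < 2) : V₂ = univ ∧ E₂ = univ := by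
  obtain ⟨hv₁, hv₂⟩ := mem_inter.mp (hVi ▸ mem_singleton_self v)
  have hV₁ : V₁ = {v} := eq_singleton_iff_unique_mem.mpr
    ⟨hv₁, fun x hx => card_le_one.mp (by omega) x hx v hv₁⟩
  have hE₁_eq : E₁ = ∅ := eq_empty_of_forall_notMem fun e he => by
    obtain ⟨x, hx, hxv⟩ := G.exists_mem_ends_ne e v
    exact hxv (mem_singleton.mp (hV₁ ▸ hE₁ e he x hx))
  constructor
  · rwa [← hVu, hV₁, eq_comm, union_eq_right, singleton_subset_iff]
  · rw [← hEu, hE₁_eq, empty_union]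

end Degenerate

theorem _root_.Graph.stmt_3 {V E : Type} [Fintype V] [Fintype E] [DecidableEq V] [DecidableEq E]
    (G : MGraph V E) (V1 V2 : Finset V) (E1 E2 : Finset E) (v : V)
    (hVu : V1 ∪ V2 = Finset.univ) (hVi : V1 ∩ V2 = {v})
    (hEu : E1 ∪ E2 = Finset.univ) (hEd : Disjoint E1 E2)
    (hE1 : ∀ e ∈ E1, ∀ x ∈ G.ends e, x ∈ V1)
    (hE2 : ∀ e ∈ E2, ∀ x ∈ G.ends e, x ∈ V2)
    (hc1 : ∀ u ∈ V1, ∀ w ∈ V1, G.Reach (fun e => if e ∈ E1 then 1 else 0) u w)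
    (hc2 : ∀ u ∈ V2, ∀ w ∈ V2, G.Reach (fun e => if e ∈ E2 then 1 else 0) u w) :
    opt2ECrel G Finset.univ Finset.univ
      = opt2ECrel G V1 E1 + opt2ECrel G V2 E2 := by
  by_cases h₁ : V1.card < 2
  · obtain ⟨rfl, rfl⟩ := eq_univ_of_card_lt_two hVu hVi hEu hE1 h₁
    rw [opt2ECrel_of_card_lt_two G E1 h₁, zero_add]
  by_cases h₂ : V2.card < 2
  · obtain ⟨rfl, rfl⟩ := eq_univ_of_card_lt_two ((union_comm V2 V1).trans hVu)
      ((inter_comm V2 V1).trans hVi) ((union_comm E2 E1).trans hEu) hE2 h₂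
    rw [opt2ECrel_of_card_lt_two G E2 h₂, add_zero]
  exact opt2ECrel_univ_eq_add hVu hVi hEu hEd hE1 hE2 hc1 hc2 (not_lt.mp h₁) (not_lt.mp h₂)

end MGraph
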